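/- For every i ≥ 0 and every r > 0, the derivative of the function r ↦ −exp(−r)·χ_{i+1}(r)/r equals exp(−r)·χ_i(r); equivalently, the derivative of r ↦ −r^{2i+1}·ψ_{i+1}(r) equals r^{2i}·ψ_i(r). -/

import Mathlib

/-- The sequence of functions `ψ_i : ℝ → ℝ` defined inductively by
`ψ_0(r) = exp(−r)` and `ψ_{i+1}(r) = −ψ_i'(r)/r`. -/
noncomputable def psi : ℕ → ℝ → ℝ
  | 0 => fun r => Real.exp (-r)
  | i + 1 => fun r => -(deriv (psi i) r) / r

/-- The reverse Bessel polynomials, defined by `χ_0 = 1`, `χ_1 = X` and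
`χ_{i+2} = X²·χ_i + (2i+1)·χ_{i+1}`. -/
noncomputable def chi : ℕ → Polynomial ℝ
  | 0 => 1
  | 1 => Polynomial.X
  | i + 2 => Polynomial.X ^ 2 * chi i + Polynomial.C (2 * (i : ℝ) + 1) * chi (i + 1)

open Polynomial

lemma chi_rec (n : ℕ) : chi (n + 2) = X ^ 2 * chi n + C (2 * (n : ℝ) + 1) * chi (n + 1) := rfl

lemma chi_deriv : ∀ i : ℕ, (X : ℝ[X]) * (chi i).derivative
    = (X + C (2 * (i : ℝ))) * chi i - chi (i + 1) := by
  intro i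
  induction i using Nat.strong_induction_on with
  | _ i ih =>
    match i with
    | 0 => simp [chi]
    | 1 =>
      simp [chi]
      rw [map_ofNat]
      ring
    | (n + 2) =>
      have h0 := ih n (by omega)
      have h1 := ih (n + 1) (by omega)
      have hr2 := chi_rec n
      have e3 : chi (n + 3) = X ^ 2 * chi (n + 1) + C (2 * ((n:ℝ) + 1) + 1) * chi (n + 2) := by
        have := chi_rec (n + 1)
        push_cast at this
        convert this using 2
      rw [chi_rec n, e3, chi_rec n]
      simp only [derivative_add, derivative_mul, derivative_C, derivative_X_pow, derivative_X]
      push_cast at h1 ⊢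
      simp only [map_add, map_mul, map_one, map_ofNat] at h0 h1 hr2 ⊢
      linear_combination (X:ℝ[X])^2 * h0 + (2 * C (n:ℝ) + 1) * h1 - (2 * C (n:ℝ) + 1) * hr2

lemma chi_deriv_eval (i : ℕ) (r : ℝ) : r * (chi i).derivative.eval r
    = (r + 2 * i) * (chi i).eval r - (chi (i + 1)).eval r := by
  have := congrArg (eval r) (chi_deriv i)
  simpa using this

lemma hexp (r : ℝ) : HasDerivAt (fun s : ℝ => Real.exp (-s)) (-Real.exp (-r)) r := by
  simpa using ((hasDerivAt_id r).neg.exp)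

lemma f_hasDeriv (i : ℕ) (r : ℝ) (hr : 0 < r) :
    HasDerivAt (fun s : ℝ => Real.exp (-s) * (chi i).eval s / s ^ (2 * i))
      (-(Real.exp (-r) * (chi (i + 1)).eval r / r ^ (2 * i + 1))) r := by
  have hnum := (hexp r).mul ((chi i).hasDerivAt r)
  have hden : HasDerivAt (fun s : ℝ => s ^ (2 * i)) ((2 * i) * r ^ (2 * i - 1)) r := by
    simpa using (hasDerivAt_pow (2 * i) r)
  have h := hnum.div hden (by positivity)
  refine h.congr_deriv ?_
  simp only [Pi.mul_apply, id]
  have hc := chi_deriv_eval i r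
  push_cast at hc
  have hrne : r ≠ 0 := hr.ne'
  rcases i with _ | i
  · norm_num at hc ⊢
    field_simp
    linear_combination hc
  · have h2 : r ^ (2 * (i + 1)) = r ^ (2 * i + 1) * r := by
      rw [show 2 * (i + 1) = (2 * i + 1) + 1 from by omega, pow_succ]
    have h3 : r ^ (2 * (i + 1) + 1) = r ^ (2 * i + 1) * r ^ 2 := by
      rw [show 2 * (i + 1) + 1 = (2 * i + 1) + 2 from by omega, pow_add]
    have he : 2 * (i + 1) - 1 = 2 * i + 1 := by omega
    rw [he, h2, h3]
    have hp : (0:ℝ) < r ^ (2 * i + 1) := pow_pos hr _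
    push_cast at hc ⊢
    field_simp
    linear_combination hc

lemma psi_eq : ∀ i : ℕ, ∀ r : ℝ, 0 < r →
    psi i r = Real.exp (-r) * (chi i).eval r / r ^ (2 * i) := by
  have key : ∀ i : ℕ,
      (∀ s : ℝ, 0 < s → psi i s = Real.exp (-s) * (chi i).eval s / s ^ (2 * i)) →
      ∀ r : ℝ, 0 < r →
        HasDerivAt (psi i) (-(Real.exp (-r) * (chi (i + 1)).eval r / r ^ (2 * i + 1))) r := by
    intro i hps r hr
    apply (f_hasDeriv i r hr).congr_of_eventuallyEq
    filter_upwards [isOpen_Ioi.eventually_mem (show r ∈ Set.Ioi 0 from hr)] with s hs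
    exact hps s hs
  intro i
  induction i with
  | zero => intro r hr; simp [psi, chi]
  | succ i ih =>
    intro r hr
    have hd := (key i ih r hr).deriv
    show -(deriv (psi i) r) / r = _
    rw [hd]
    have hrne : r ≠ 0 := hr.ne'
    rw [show 2 * (i + 1) = (2 * i + 1) + 1 from by omega, pow_succ]
    field_simp
    ring

lemma psi_hasDeriv (i : ℕ) (r : ℝ) (hr : 0 < r) :
    HasDerivAt (psi i) (-(Real.exp (-r) * (chi (i + 1)).eval r / r ^ (2 * i + 1))) r := by
  apply (f_hasDeriv i r hr).congr_of_eventuallyEq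
  filter_upwards [isOpen_Ioi.eventually_mem (show r ∈ Set.Ioi 0 from hr)] with s hs
  exact psi_eq i s hs

lemma part1 (i : ℕ) (r : ℝ) (hr : 0 < r) :
    HasDerivAt (fun s : ℝ => -(Real.exp (-s) * (chi (i + 1)).eval s / s))
      (Real.exp (-r) * (chi i).eval r) r := by
  have hnum := (hexp r).mul ((chi (i + 1)).hasDerivAt r)
  have h := (hnum.div (hasDerivAt_id r) hr.ne').neg
  refine h.congr_deriv ?_
  simp only [Pi.mul_apply, id]
  have hc := chi_deriv_eval (i + 1) r
  have hrec := congrArg (eval r) (chi_rec i)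
  simp only [eval_add, eval_mul, eval_pow, eval_X, eval_C] at hrec
  push_cast at hc
  have hrne : r ≠ 0 := hr.ne'
  field_simp
  linear_combination hrec - hc

theorem deriv_antiderivative (i : ℕ) (r : ℝ) (hr : 0 < r) :
    deriv (fun s => -(Real.exp (-s) * (chi (i + 1)).eval s / s)) r
        = Real.exp (-r) * (chi i).eval r ∧
    deriv (fun s => -(s ^ (2 * i + 1) * psi (i + 1) s)) r = r ^ (2 * i) * psi i r := by
  constructor
  · exact (part1 i r hr).deriv
  · have heq : (fun s : ℝ => -(s ^ (2 * i + 1) * psi (i + 1) s))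
        =ᶠ[nhds r] fun s => -(Real.exp (-s) * (chi (i + 1)).eval s / s) := by
      filter_upwards [isOpen_Ioi.eventually_mem (show r ∈ Set.Ioi 0 from hr)] with s hs
      have hsne : (s:ℝ) ≠ 0 := (Set.mem_Ioi.mp hs).ne'
      rw [psi_eq (i + 1) s hs]
      rw [show 2 * (i + 1) = (2 * i + 1) + 1 from by omega, pow_succ]
      field_simp
      ring
    rw [heq.deriv_eq, (part1 i r hr).deriv, psi_eq i r hr]
    field_simp
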